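/- Let z, p > 0 with p < z, and let p₁ > 0 satisfy (p−3z)p₁² + p²(p+z) = 0 (so p₁² = p²(p+z)/(3z−p)) and p₁ < 2p²/(p+z). Then p²(5p+z)(p−z)²/(p+z)² < 0, a contradiction; hence no such p₁ exists when p ≠ z. -/

import Mathlib

theorem stmt_19 (z p p₁ : ℝ) (hz : 0 < z) (hp : 0 < p) (hpz : p < z) (hp₁ : 0 < p₁)
    (heq : (p - 3 * z) * p₁ ^ 2 + p ^ 2 * (p + z) = 0)
    (hlt : p₁ < 2 * p ^ 2 / (p + z)) :
    False := by
  have hpz' : 0 < p + z := by linarith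
  have h2 : p₁ * (p + z) < 2 * p ^ 2 := by
    rw [div_eq_mul_inv] at hlt
    calc p₁ * (p + z) < 2 * p ^ 2 * (p + z)⁻¹ * (p + z) := by
          exact mul_lt_mul_of_pos_right hlt hpz'
      _ = 2 * p ^ 2 := by field_simp
  have h3 : p₁ ^ 2 * (p + z) ^ 2 < 4 * p ^ 4 := by
    nlinarith [mul_pos hp₁ hpz', sq_nonneg p]
  have h4 : p₁ ^ 2 * (3 * z - p) = p ^ 2 * (p + z) := by nlinarith
  have h35 : 0 < 3 * z - p := by linarith
  have h6 : p₁ ^ 2 * (p + z) ^ 2 * (3 * z - p) < 4 * p ^ 4 * (3 * z - p) :=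
    mul_lt_mul_of_pos_right h3 h35
  have h7 : p ^ 2 * (p + z) ^ 3 < 4 * p ^ 4 * (3 * z - p) := by nlinarith
  have hne : p - z ≠ 0 := by linarith
  have h5 : 0 < (p - z) ^ 2 := by positivity
  nlinarith [mul_pos (mul_pos (mul_pos hp hp) h5) (show (0:ℝ) < 5 * p + z by linarith)]
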